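/- arXiv:1803.11302 — 3 statements merged into one kernel-verified Lean document; each statement's English description precedes it below -/
import Mathlib

section
/- Let W_{g_S}, W_{g_T}, W_{g_U} be the wedge products of ds's over the n−3 propagators of three cubic tree graphs g_S, g_T, g_U which share n−4 common propagators and differ only in one propagator, equal to S, T, U respectively, where S + T + U equals a constant (sum of the four adjacent channel invariants, which is fixed by the shared propagators). Then W_{g_S} + W_{g_T} + W_{g_U} = 0. -/
open ExteriorAlgebra

/-- Jacobi identity for wedge products: three cubic trees sharing n−4 propagators
(whose `ds`'s form the products of the lists `l1`, `l2` around the differing slot)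
and differing in one propagator S, T, U with dS + dT + dU = 0 satisfy
W_{g_S} + W_{g_T} + W_{g_U} = 0 in the exterior algebra. -/
theorem stmt1 (n : ℕ) (V : Type*) [AddCommGroup V] [Module ℝ V]
    (l1 l2 : List V) (hlen : l1.length + l2.length = n - 4)
    (S T U : V) (h : S + T + U = 0) :
    (l1.map (ι ℝ)).prod * ι ℝ S * (l2.map (ι ℝ)).prod
      + (l1.map (ι ℝ)).prod * ι ℝ T * (l2.map (ι ℝ)).prod
      + (l1.map (ι ℝ)).prod * ι ℝ U * (l2.map (ι ℝ)).prod
      = (0 : ExteriorAlgebra ℝ V) := by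
  have h0 : ι ℝ S + ι ℝ T + ι ℝ U = (0 : ExteriorAlgebra ℝ V) := by
    rw [← map_add, ← map_add, h, map_zero]
  calc (l1.map (ι ℝ)).prod * ι ℝ S * (l2.map (ι ℝ)).prod
      + (l1.map (ι ℝ)).prod * ι ℝ T * (l2.map (ι ℝ)).prod
      + (l1.map (ι ℝ)).prod * ι ℝ U * (l2.map (ι ℝ)).prod
      = (l1.map (ι ℝ)).prod * (ι ℝ S + ι ℝ T + ι ℝ U) * (l2.map (ι ℝ)).prod := by
        noncomm_ring
    _ = 0 := by rw [h0, mul_zero, zero_mul]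
end

section
/- The momentum-conservation relations Σ_{b≠a} s_{ab} = 0 for a = 1,…,n imply the linear relations Σ_a σ_a^k E_a = 0 for k = 0, 1, 2, where E_a = Σ_{b≠a} s_{ab}/(σ_a − σ_b). Hence at most n−3 of the n scattering equations are linearly independent. -/
/-!
Summing `σ_a^k E_a` over `a` and symmetrising in `(a, b)` with `s_{ab} = s_{ba}` replaces
`σ_a^k / (σ_a - σ_b)` by `(σ_a^k - σ_b^k) / (σ_a - σ_b) = ∑_{i<k} σ_a^i σ_b^{k-1-i}`.
For `k ≤ 2` this is `0`, `1` or `σ_a + σ_b`, and each of these terms vanishes against `s_{ab}`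
by momentum conservation.
-/

open Finset

lemma pow_div_sub_add_pow_div_sub {K : Type*} [Field K] {x y : K} (h : x ≠ y) (k : ℕ) :
    x ^ k / (x - y) + y ^ k / (y - x) = ∑ i ∈ range k, x ^ i * y ^ (k - 1 - i) := by
  rw [geom₂_sum h, ← neg_sub x y, div_neg, ← sub_eq_add_neg, sub_div]

section Symmetrization

variable {ι : Type*} [Fintype ι] [DecidableEq ι]

lemma sum_sum_erase_swap {M : Type*} [AddCommMonoid M] (f : ι → ι → M) :
    ∑ a, ∑ b ∈ univ.erase a, f a b = ∑ a, ∑ b ∈ univ.erase a, f b a :=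
  sum_comm' fun a b => by simp only [mem_univ, mem_erase, true_and, and_true, ne_comm]

variable {R : Type*} [CommSemiring R] {s : ι → ι → R}
  (hsym : ∀ a b, s a b = s b a) (hmom : ∀ a, ∑ b ∈ univ.erase a, s a b = 0)

include hsym in
lemma two_mul_sum_sum_erase_of_symm (g : ι → ι → R) :
    2 * ∑ a, ∑ b ∈ univ.erase a, s a b * g a b
      = ∑ a, ∑ b ∈ univ.erase a, s a b * (g a b + g b a) := by
  rw [two_mul]
  nth_rw 2 [sum_sum_erase_swap]
  simp only [hsym _ _, mul_add, sum_add_distrib]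

include hmom

lemma sum_sum_erase_mul_left_eq_zero (f : ι → R) :
    ∑ a, ∑ b ∈ univ.erase a, s a b * f a = 0 :=
  sum_eq_zero fun a _ => by rw [← sum_mul, hmom, zero_mul]

include hsym in
lemma sum_sum_erase_mul_right_eq_zero (f : ι → R) :
    ∑ a, ∑ b ∈ univ.erase a, s a b * f b = 0 := by
  rw [sum_sum_erase_swap]
  simp only [hsym _ _]
  exact sum_sum_erase_mul_left_eq_zero hmom f

end Symmetrization

section ScatteringEquations

variable {ι K : Type*} [Fintype ι] [DecidableEq ι] [Field K] {σ : ι → K} {s : ι → ι → K}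

lemma two_mul_sum_pow_mul_scattering (hσ : Function.Injective σ) (hsym : ∀ a b, s a b = s b a)
    (k : ℕ) :
    2 * ∑ a, σ a ^ k * ∑ b ∈ univ.erase a, s a b / (σ a - σ b)
      = ∑ a, ∑ b ∈ univ.erase a, s a b * ∑ i ∈ range k, σ a ^ i * σ b ^ (k - 1 - i) := by
  have hexpand : ∑ a, σ a ^ k * ∑ b ∈ univ.erase a, s a b / (σ a - σ b)
      = ∑ a, ∑ b ∈ univ.erase a, s a b * (σ a ^ k / (σ a - σ b)) := by
    simp only [mul_sum, mul_div, mul_comm]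
  rw [hexpand, two_mul_sum_sum_erase_of_symm hsym]
  refine sum_congr rfl fun a _ => sum_congr rfl fun b hb => ?_
  rw [pow_div_sub_add_pow_div_sub (hσ.ne (ne_of_mem_erase hb).symm)]

theorem sum_pow_mul_scattering_eq_zero [NeZero (2 : K)] (hσ : Function.Injective σ)
    (hsym : ∀ a b, s a b = s b a) (hmom : ∀ a, ∑ b ∈ univ.erase a, s a b = 0) {k : ℕ}
    (hk : k ≤ 2) :
    ∑ a, σ a ^ k * ∑ b ∈ univ.erase a, s a b / (σ a - σ b) = 0 := by
  refine (mul_eq_zero.mp ?_).resolve_left two_ne_zero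
  rw [two_mul_sum_pow_mul_scattering hσ hsym]
  interval_cases k
  · simp
  · simpa using sum_sum_erase_mul_left_eq_zero hmom (fun _ => (1 : K))
  · have hgeom (x y : K) : ∑ i ∈ range 2, x ^ i * y ^ (2 - 1 - i) = y + x := by
      simp [sum_range_succ]
    simp only [hgeom, mul_add, sum_add_distrib, sum_sum_erase_mul_right_eq_zero hsym hmom,
      sum_sum_erase_mul_left_eq_zero hmom, add_zero]

end ScatteringEquations

theorem stmt8_general (n : ℕ) (σ : Fin n → ℂ) (hσ : Function.Injective σ)
    (s : Fin n → Fin n → ℝ) (hsym : ∀ a b, s a b = s b a)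
    (hmom : ∀ a, ∑ b ∈ univ.erase a, s a b = 0)
    (E : Fin n → ℂ)
    (hE : ∀ a, E a = ∑ b ∈ univ.erase a, (s a b : ℂ) / (σ a - σ b)) :
    ∀ k : ℕ, k ≤ 2 → ∑ a, σ a ^ k * E a = 0 := by
  intro k hk
  obtain rfl : E = fun a => ∑ b ∈ univ.erase a, (s a b : ℂ) / (σ a - σ b) := funext hE
  exact sum_pow_mul_scattering_eq_zero (s := fun a b => (s a b : ℂ)) hσ
    (fun a b => by rw [hsym]) (fun a => by exact_mod_cast hmom a) hk

/-- Momentum conservation Σ_{b≠a} s_{ab} = 0 implies the SL(2) relations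
Σ_a σ_a^k E_a = 0 for k = 0, 1, 2 among the scattering equations. -/
theorem stmt8 (n : ℕ) (σ : Fin n → ℂ) (hσ : Function.Injective σ)
    (s : Fin n → Fin n → ℝ) (hsym : ∀ a b, s a b = s b a) (hdiag : ∀ a, s a a = 0)
    (hmom : ∀ a, ∑ b ∈ univ.erase a, s a b = 0)
    (E : Fin n → ℂ)
    (hE : ∀ a, E a = ∑ b ∈ univ.erase a, (s a b : ℂ) / (σ a - σ b)) :
    ∀ k : ℕ, k ≤ 2 → ∑ a, σ a ^ k * E a = 0 :=
  stmt8_general n σ hσ s hsym hmom E hE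
end

section
/- On the hyperplane H(C_n) defined by setting s_{pq} constant for all pairs (p,q), 2 ≤ p < q ≤ n, that are not edges of the tree C_n, if a cubic tree graph g has a propagator s_A where A ⊆ {2,…,n} does not induce a connected subgraph of C_n, then the pullback of W_g to H(C_n) vanishes, i.e., the Jacobian N_g of (s_1^{(g)},…,s_{n−3}^{(g)}) with respect to coordinates on H(C_n) is zero. -/
/-!
Take a largest channel `C` that is disconnected in the tree `T`, and the smallest set `D` among
the channels and the whole vertex set that strictly contains `C`; by the choice of `C`, `D` is
connected. Since `T` is a forest, `T[D]` has at least `|D| - 1` edges, `T[C]` at most `|C| - 2`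
and `T[D \ C]` at most `|D \ C| - 1`, so at least two edges `e₁ ≠ e₂` join `C` to `D \ C`.
Compatibility and the minimality of `D` force a channel to contain such an edge exactly when it
contains `D`, so `δ = 1_{e₁} - 1_{e₂}` is annihilated by every `ds_A`.
-/

open Finset

namespace Finset

variable {V : Type*} [DecidableEq V]

theorem mem_sym2_iff_subset_of_crossing {C D S : Finset V} {e : Sym2 V}
    (he : e ∈ D.sym2 \ (C.sym2 ∪ (D \ C).sym2))
    (hSC : S ⊆ C ∨ C ⊆ S ∨ Disjoint S C) (hSD : S ⊆ D ∨ D ⊆ S ∨ Disjoint S D)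
    (hmin : C ⊂ S → S ⊆ D → S = D) : e ∈ S.sym2 ↔ D ⊆ S := by
  simp only [mem_sdiff, mem_union, not_or, mem_sym2_iff, not_forall] at he
  obtain ⟨heD, ⟨b, hbe, hbC⟩, ⟨a, hae, haC⟩⟩ := he
  replace haC : a ∈ C := by simpa [heD a hae] using haC
  rw [mem_sym2_iff]
  refine ⟨fun heS => ?_, fun hDS x hx => hDS (heD x hx)⟩
  rcases hSC with hSC | hCS | hSC
  · exact absurd (hSC (heS b hbe)) hbC
  · rcases hSD with hSD | hDS | hSD
    · exact (hmin (ssubset_of_subset_not_subset hCS fun h => hbC (h (heS b hbe))) hSD).ge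
    · exact hDS
    · exact absurd (heD b hbe) (disjoint_left.1 hSD (heS b hbe))
  · exact absurd haC (disjoint_left.1 hSC (heS a hae))

theorem sum_sum_ite_mk_eq {R : Type*} [AddCommMonoidWithOne R] (S : Finset V) {e : Sym2 V}
    (he : ¬e.IsDiag) :
    ∑ p ∈ S, ∑ q ∈ S, (if s(p, q) = e then (1 : R) else 0) = if e ∈ S.sym2 then 2 else 0 := by
  induction e using Sym2.ind with
  | h a b =>
  have hab : a ≠ b := he
  rw [← sum_product' (f := fun p q => if s(p, q) = s(a, b) then (1 : R) else 0), sum_boole]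
  split_ifs with h
  · rw [mk_mem_sym2_iff] at h
    have : {x ∈ S ×ˢ S | s(x.1, x.2) = s(a, b)} = {(a, b), (b, a)} := by
      ext ⟨p, q⟩
      simp only [mem_filter, mem_product, Sym2.eq_iff, mem_insert, mem_singleton, Prod.mk.injEq]
      aesop
    rw [this, card_pair (by simp [hab]), Nat.cast_two]
  · rw [mk_mem_sym2_iff] at h
    rw [filter_eq_empty_iff.2, card_empty, Nat.cast_zero]
    rintro ⟨p, q⟩ hpq hpq'
    simp only [mem_product, Sym2.eq_iff] at hpq hpq'
    aesop

end Finset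

namespace SimpleGraph

variable {V : Type*} [Fintype V] {G : SimpleGraph V}

section

variable [DecidableRel G.Adj]

theorem IsAcyclic.card_edgeFinset_add_one_le [Nonempty V] (hG : G.IsAcyclic) :
    #G.edgeFinset + 1 ≤ Fintype.card V := by
  classical
  obtain ⟨F, hGF, -, hF⟩ := connected_top.exists_isTree_le_of_le_of_isAcyclic le_top hG
  rw [← hF.card_edgeFinset]
  gcongr

variable [DecidableEq V]

theorem IsAcyclic.card_edgeFinset_add_two_le [Nonempty V] (hG : G.IsAcyclic)
    (hdisc : ¬G.Connected) : #G.edgeFinset + 2 ≤ Fintype.card V := by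
  obtain ⟨x, y, hxy⟩ : ∃ x y, ¬G.Reachable x y := by
    simpa [connected_iff, Preconnected, ‹Nonempty V›] using hdisc
  have hne : x ≠ y := fun h => hxy (h ▸ Reachable.refl x)
  have := (hG.sup_edge_of_not_reachable hxy).card_edgeFinset_add_one_le
  calc #G.edgeFinset + 2 = #(G ⊔ edge x y).edgeFinset + 1 := by
        rw [G.card_edgeFinset_sup_edge (fun h => hxy h.reachable) hne]
    _ ≤ Fintype.card V := by convert this

theorem card_edgeFinset_inter_sym2 (s : Finset V) :
    #(G.edgeFinset ∩ s.sym2) = #(G.induce ↑s).edgeFinset := by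
  rw [← filter_edgeFinset_toFinset_subset, card_filter_edgeFinset_toFinset_subset]

theorem IsAcyclic.card_edgeFinset_inter_sym2_add_one_le (hG : G.IsAcyclic) {s : Finset V}
    (hs : s.Nonempty) : #(G.edgeFinset ∩ s.sym2) + 1 ≤ #s := by
  have : Nonempty (s : Set V) := hs.to_subtype
  simpa [card_edgeFinset_inter_sym2] using (hG.induce (s : Set V)).card_edgeFinset_add_one_le

theorem IsAcyclic.card_edgeFinset_inter_sym2_add_two_le (hG : G.IsAcyclic) {s : Finset V}
    (hs : s.Nonempty) (hdisc : ¬(G.induce ↑s).Connected) : #(G.edgeFinset ∩ s.sym2) + 2 ≤ #s := by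
  have : Nonempty (s : Set V) := hs.to_subtype
  simpa [card_edgeFinset_inter_sym2] using (hG.induce (s : Set V)).card_edgeFinset_add_two_le hdisc

theorem Connected.card_le_card_edgeFinset_inter_sym2_add_one {s : Finset V}
    (hs : (G.induce ↑s).Connected) : #s ≤ #(G.edgeFinset ∩ s.sym2) + 1 := by
  have := hs.card_vert_le_card_edgeSet_add_one
  rw [Nat.card_eq_fintype_card, Nat.card_eq_fintype_card, ← edgeFinset_card] at this
  simpa [card_edgeFinset_inter_sym2] using this

theorem IsAcyclic.two_le_card_edgeFinset_crossing (hG : G.IsAcyclic)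
    {C D : Finset V} (hCD : C ⊂ D) (hC : C.Nonempty) (hCdisc : ¬(G.induce ↑C).Connected)
    (hD : (G.induce ↑D).Connected) :
    2 ≤ #((G.edgeFinset ∩ D.sym2) \ (C.sym2 ∪ (D \ C).sym2)) := by
  have hsplit : #(G.edgeFinset ∩ D.sym2) ≤ #((G.edgeFinset ∩ D.sym2) \ (C.sym2 ∪ (D \ C).sym2))
      + (#(G.edgeFinset ∩ C.sym2) + #(G.edgeFinset ∩ (D \ C).sym2)) := by
    rw [← card_sdiff_add_card_inter _ (C.sym2 ∪ (D \ C).sym2)]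
    gcongr
    refine (card_le_card fun e he => ?_).trans (card_union_le _ _)
    simp only [mem_inter, mem_union] at he ⊢
    tauto
  have hDC : (D \ C).Nonempty := sdiff_nonempty.2 hCD.not_subset
  have := hD.card_le_card_edgeFinset_inter_sym2_add_one
  have := hG.card_edgeFinset_inter_sym2_add_two_le hC hCdisc
  have := hG.card_edgeFinset_inter_sym2_add_one_le hDC
  have := card_sdiff_of_subset hCD.subset
  have := card_lt_card hCD
  omega

end

theorem IsTree.exists_edges_ne_forall_mem_sym2_iff (hG : G.IsTree) {ι : Type*} [Fintype ι]
    (A : ι → Finset V) (hA : ∀ i, (A i).Nonempty)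
    (hcompat : ∀ i j, A i ⊆ A j ∨ A j ⊆ A i ∨ Disjoint (A i) (A j))
    (hdisc : ∃ i, ¬(G.induce ↑(A i)).Connected) :
    ∃ e₁ ∈ G.edgeSet, ∃ e₂ ∈ G.edgeSet, e₁ ≠ e₂ ∧ ∀ i, (e₁ ∈ (A i).sym2 ↔ e₂ ∈ (A i).sym2) := by
  classical
  obtain ⟨k, hk, hkmax⟩ := exists_max_image {i | ¬(G.induce ↑(A i)).Connected} (fun i => #(A i))
    (by simpa [Finset.Nonempty] using hdisc)
  set C := A k
  replace hk : ¬(G.induce ↑C).Connected := (mem_filter.1 hk).2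
  have huniv : (G.induce ↑(univ : Finset V)).Connected := by
    rw [coe_univ]
    exact (induceUnivIso G).connected_iff.2 hG.connected
  set F : Finset (Finset V) := insert univ (univ.image A)
  have hconn : ∀ S ∈ F, #C < #S → (G.induce ↑S).Connected := by
    intro S hS hCS
    rcases mem_insert.1 hS with rfl | hS
    · exact huniv
    · obtain ⟨l, -, rfl⟩ := mem_image.1 hS
      by_contra hl
      exact hCS.not_ge (hkmax l (mem_filter.2 ⟨mem_univ l, hl⟩))
  have hlam : ∀ S ∈ F, ∀ i, A i ⊆ S ∨ S ⊆ A i ∨ Disjoint (A i) S := by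
    intro S hS i
    rcases mem_insert.1 hS with rfl | hS
    · exact Or.inl (subset_univ _)
    · obtain ⟨l, -, rfl⟩ := mem_image.1 hS
      exact hcompat i l
  have hCuniv : C ⊂ univ := ssubset_univ_iff.2 fun h => hk (h ▸ huniv)
  obtain ⟨D, hD, hDmin⟩ := exists_min_image {S ∈ F | C ⊂ S} card
    ⟨univ, mem_filter.2 ⟨mem_insert_self _ _, hCuniv⟩⟩
  obtain ⟨hDF, hCD⟩ := mem_filter.1 hD
  have hcross := hG.isAcyclic.two_le_card_edgeFinset_crossing hCD (hA k) hk
    (hconn D hDF (card_lt_card hCD))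
  obtain ⟨e₁, he₁, e₂, he₂, hne⟩ := one_lt_card.1 hcross
  have hpattern : ∀ e ∈ (G.edgeFinset ∩ D.sym2) \ (C.sym2 ∪ (D \ C).sym2),
      ∀ i, e ∈ (A i).sym2 ↔ D ⊆ A i := by
    intro e he i
    refine mem_sym2_iff_subset_of_crossing ?_ (hcompat i k) (hlam D hDF i) fun hCi hiD =>
      eq_of_subset_of_card_le hiD (hDmin (A i) (mem_filter.2 ⟨?_, hCi⟩))
    · exact mem_sdiff.2 ⟨(mem_inter.1 (mem_sdiff.1 he).1).2, (mem_sdiff.1 he).2⟩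
    · exact mem_insert_of_mem (mem_image_of_mem A (mem_univ i))
  have hedge : ∀ e ∈ (G.edgeFinset ∩ D.sym2) \ (C.sym2 ∪ (D \ C).sym2), e ∈ G.edgeSet :=
    fun e he => mem_edgeFinset.1 (mem_inter.1 (mem_sdiff.1 he).1).1
  exact ⟨e₁, hedge e₁ he₁, e₂, hedge e₂ he₂, hne, fun i => by
    rw [hpattern e₁ he₁, hpattern e₂ he₂]⟩

end SimpleGraph

theorem stmt19_general (n : ℕ)
    (T : SimpleGraph (Fin (n - 1))) (hT : T.IsTree)
    (A : Fin (n - 3) → Finset (Fin (n - 1)))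
    (hsize : ∀ k, 2 ≤ (A k).card ∧ (A k).card ≤ n - 3)
    (hcompat : ∀ k l, A k ⊆ A l ∨ A l ⊆ A k ∨ Disjoint (A k) (A l))
    (hdisc : ∃ k, ¬ (T.induce ((A k : Set (Fin (n - 1))))).Connected) :
    ∃ δ : Fin (n - 1) → Fin (n - 1) → ℝ, δ ≠ 0 ∧
      (∀ p q, δ p q = δ q p) ∧
      (∀ p q, ¬ T.Adj p q → δ p q = 0) ∧
      (∑ p, ∑ q, δ p q) = 0 ∧
      (∀ k, (∑ p ∈ A k, ∑ q ∈ A k, δ p q) = 0) := by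
  obtain ⟨e₁, he₁, e₂, he₂, hne, hpattern⟩ := hT.exists_edges_ne_forall_mem_sym2_iff A
    (fun k => card_pos.1 (two_pos.trans_le (hsize k).1)) hcompat hdisc
  let δ : Fin (n - 1) → Fin (n - 1) → ℝ := fun p q =>
    (if s(p, q) = e₁ then 1 else 0) - (if s(p, q) = e₂ then 1 else 0)
  have hsum : ∀ S : Finset (Fin (n - 1)), ∑ p ∈ S, ∑ q ∈ S, δ p q =
      (if e₁ ∈ S.sym2 then 2 else 0) - (if e₂ ∈ S.sym2 then 2 else 0) := fun S => by
    simp only [δ, sum_sub_distrib, sum_sum_ite_mk_eq S (T.not_isDiag_of_mem_edgeSet he₁),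
      sum_sum_ite_mk_eq S (T.not_isDiag_of_mem_edgeSet he₂)]
  refine ⟨δ, ?_, fun p q => by simp only [δ, Sym2.eq_swap], fun p q hpq => ?_,
    by simp [hsum univ], fun k => by rw [hsum, if_congr (hpattern k) rfl rfl, sub_self]⟩
  · obtain ⟨⟨a, b⟩, rfl⟩ := Quot.exists_rep e₁
    intro h
    simpa [δ, hne] using congrFun (congrFun h a) b
  · have hnot : ∀ e ∈ T.edgeSet, s(p, q) ≠ e := fun e he h => hpq (by rwa [← SimpleGraph.mem_edgeSet, h])
    simp only [δ, if_neg (hnot e₁ he₁), if_neg (hnot e₂ he₂), sub_zero]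

/-- Vanishing pullback on a Cayley hyperplane H(C_n): if a cubic tree's channels
A 1, …, A (n−3) (mutually compatible subsets of the vertex set {2,…,n} of the
spanning tree T = C_n) include one that does not induce a connected subgraph of
T, then the (n−3) differentials ds_{A k} are linearly dependent on the tangent
space of H(C_n) — i.e. there is a nonzero tangent vector δ (symmetric, supported
on the edges of C_n, with total sum zero) annihilated by all of them; hence the
Jacobian N_g vanishes. -/
theorem stmt19 (n : ℕ) (hn : 4 ≤ n)
    (T : SimpleGraph (Fin (n - 1))) (hT : T.IsTree)
    (A : Fin (n - 3) → Finset (Fin (n - 1)))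
    (hinj : Function.Injective A)
    (hsize : ∀ k, 2 ≤ (A k).card ∧ (A k).card ≤ n - 3)
    (hcompat : ∀ k l, A k ⊆ A l ∨ A l ⊆ A k ∨ Disjoint (A k) (A l))
    (hdisc : ∃ k, ¬ (T.induce ((A k : Set (Fin (n - 1))))).Connected) :
    ∃ δ : Fin (n - 1) → Fin (n - 1) → ℝ, δ ≠ 0 ∧
      (∀ p q, δ p q = δ q p) ∧
      (∀ p q, ¬ T.Adj p q → δ p q = 0) ∧
      (∑ p, ∑ q, δ p q) = 0 ∧
      (∀ k, (∑ p ∈ A k, ∑ q ∈ A k, δ p q) = 0) :=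
  stmt19_general n T hT A hsize hcompat hdisc
end
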